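/- arXiv:2108.13774 — 3 statements merged into one kernel-verified Lean document; each statement's English description precedes it below -/
import Mathlib

section
/- Every bounded poset P can be embedded into an orthomodular poset: there exist an orthomodular poset K and an order embedding f : P → K (i.e., x ≤ y if and only if f(x) ≤ f(y)) with f(0) = 0 and f(1) = 1. -/
/-- An orthomodular poset: a bounded poset with an antitone involution `compl` such that
(OMP1) `⊥` is the greatest lower bound of `{x, x'}` for every `x`;
(OMP2) any two orthogonal elements (`x ≤ compl y`) have a least upper bound;
(OMP3) if `x ≤ y` then `x ∨ (x ∨ y')' = y`, i.e. whenever `s` is the join of `x` and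
`compl y`, the element `y` is the join of `x` and `compl s`. -/
structure OrthomodularPoset where
  carrier : Type*
  [po : PartialOrder carrier]
  [bdd : BoundedOrder carrier]
  compl : carrier → carrier
  le_iff_compl_le : ∀ x y : carrier, x ≤ y ↔ compl y ≤ compl x
  compl_compl : ∀ x : carrier, compl (compl x) = x
  omp1 : ∀ x : carrier, IsGLB {x, compl x} ⊥
  omp2 : ∀ x y : carrier, x ≤ compl y → ∃ s, IsLUB ({x, y} : Set carrier) s
  omp3 : ∀ x y s t : carrier, x ≤ y →
    IsLUB ({x, compl y} : Set carrier) s → IsLUB ({x, compl s} : Set carrier) t → t = y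

attribute [instance] OrthomodularPoset.po OrthomodularPoset.bdd

universe u

namespace OMPEmbed

variable (P : Type u) [PartialOrder P] [BoundedOrder P]

/-- The underlying set of points: nonzero elements of `P`. -/
def Omega : Type u := {z : P // z ≠ ⊥}

variable {P}

/-- The embedding of `P` into subsets of `Omega P`. -/
def g (x : P) : Set (Omega P) := {z | z.val ≤ x}

lemma g_bot : g (⊥ : P) = (∅ : Set (Omega P)) := by
  ext z
  simp only [g, Set.mem_setOf_eq, Set.mem_empty_iff_false, iff_false, le_bot_iff]
  exact z.property

lemma g_top : g (⊤ : P) = (Set.univ : Set (Omega P)) := by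
  ext z; simp [g]

lemma g_le_iff {x y : P} : x ≤ y ↔ g x ⊆ g y := by
  constructor
  · intro h z hz; exact le_trans hz h
  · intro h
    by_cases hx : x = ⊥
    · simp [hx]
    · exact h (show (⟨x, hx⟩ : Omega P) ∈ g x from le_refl x)

variable (P)

/-- The concrete logic generated by the image of `g`: close under complements and
disjoint unions. -/
inductive Mem : Set (Omega P) → Prop
  | base (x : P) : Mem (g x)
  | compl {A : Set (Omega P)} : Mem A → Mem Aᶜ
  | union {A B : Set (Omega P)} : Mem A → Mem B → Disjoint A B → Mem (A ∪ B)

/-- The carrier of the orthomodular poset. -/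
def Carrier : Type u := {A : Set (Omega P) // Mem P A}

instance : PartialOrder (Carrier P) := Subtype.partialOrder _

lemma carrier_le_iff (A B : Carrier P) : A ≤ B ↔ A.val ⊆ B.val := Iff.rfl

instance : OrderTop (Carrier P) where
  top := ⟨Set.univ, by simpa [g_top] using Mem.base (P := P) ⊤⟩
  le_top A := by intro z _; trivial

instance : OrderBot (Carrier P) where
  bot := ⟨∅, by simpa [g_bot] using Mem.base (P := P) ⊥⟩
  bot_le A := by intro z hz; exact absurd hz (Set.notMem_empty z)

instance : BoundedOrder (Carrier P) where

lemma bot_val : (⊥ : Carrier P).val = ∅ := rfl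

/-- Complementation on the carrier. -/
def cpl (A : Carrier P) : Carrier P := ⟨A.valᶜ, A.property.compl⟩

variable {P}

/-- The union of two disjoint members is their least upper bound. -/
lemma isLUB_union {A B : Carrier P} (h : Disjoint A.val B.val) :
    IsLUB ({A, B} : Set (Carrier P)) ⟨A.val ∪ B.val, A.property.union B.property h⟩ := by
  constructor
  · rintro c (rfl | rfl)
    · exact Set.subset_union_left
    · exact Set.subset_union_right
  · intro c hc
    have h1 : A ≤ c := hc (Set.mem_insert _ _)
    have h2 : B ≤ c := hc (Set.mem_insert_of_mem _ rfl)
    exact Set.union_subset h1 h2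

variable (P)

/-- The orthomodular poset. -/
noncomputable def K : OrthomodularPoset.{u} where
  carrier := Carrier P
  compl := cpl P
  le_iff_compl_le x y := by
    constructor
    · intro h; exact Set.compl_subset_compl.mpr h
    · intro h; exact Set.compl_subset_compl.mp h
  compl_compl x := Subtype.ext (compl_compl x.val)
  omp1 x := by
    constructor
    · rintro c (rfl | rfl)
      · exact bot_le
      · exact bot_le
    · intro c hc
      have h1 : c ≤ x := hc (Set.mem_insert _ _)
      have h2 : c ≤ cpl P x := hc (Set.mem_insert_of_mem _ rfl)
      intro z hz
      exact absurd (h1 hz) (h2 hz)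
  omp2 x y hxy := by
    have hd : Disjoint x.val y.val := by
      rw [Set.disjoint_left]
      intro z hz hzy
      exact (hxy hz) hzy
    exact ⟨_, isLUB_union hd⟩
  omp3 x y s t hxy hs ht := by
    -- s is the unique LUB of {x, yᶜ}, hence s = x ∪ yᶜ
    have hd : Disjoint x.val (cpl P y).val := by
      rw [Set.disjoint_left]
      intro z hz hzc
      exact hzc (hxy hz)
    have hs' : s = ⟨x.val ∪ (cpl P y).val, x.property.union (cpl P y).property hd⟩ :=
      hs.unique (isLUB_union hd)
    -- now show y is the LUB of {x, sᶜ}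
    have hy : IsLUB ({x, cpl P s} : Set (Carrier P)) y := by
      constructor
      · rintro c (rfl | rfl)
        · exact hxy
        · -- (x ∪ yᶜ)ᶜ ⊆ y
          intro z hz
          rw [hs'] at hz
          simp only [cpl, Set.mem_compl_iff, Set.mem_union, not_or, not_not] at hz
          exact hz.2
      · intro c hc
        have h1 : x ≤ c := hc (Set.mem_insert _ _)
        have h2 : cpl P s ≤ c := hc (Set.mem_insert_of_mem _ rfl)
        intro z hz
        by_cases hzx : z ∈ x.val
        · exact h1 hzx
        · apply h2
          rw [hs']
          simp only [cpl, Set.mem_compl_iff, Set.mem_union, not_or, not_not]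
          exact ⟨hzx, hz⟩
    exact ht.unique hy

end OMPEmbed

/-- Every bounded poset `P` embeds into an orthomodular poset:
there are an orthomodular poset `K` and an order embedding `f : P → K.carrier`
preserving the bounds. -/
theorem bounded_poset_embeds_into_orthomodular_poset
    (P : Type u) [PartialOrder P] [BoundedOrder P] :
    ∃ (K : OrthomodularPoset.{u}) (f : P → K.carrier),
      (∀ x y : P, x ≤ y ↔ f x ≤ f y) ∧ f ⊥ = ⊥ ∧ f ⊤ = ⊤ := by
  refine ⟨OMPEmbed.K P, fun x => ⟨OMPEmbed.g x, OMPEmbed.Mem.base x⟩, ?_, ?_, ?_⟩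
  · intro x y
    exact OMPEmbed.g_le_iff
  · exact Subtype.ext OMPEmbed.g_bot
  · exact Subtype.ext OMPEmbed.g_top
end

section
/- Let A be a bounded poset with involution equipped with a partial operation + defined exactly on orthogonal pairs (x + y is defined iff x ⊥ y) and a partial operation − defined exactly on comparable pairs (y − x is defined iff x ≤ y). Assume + is isotone (if a ≤ c, b ≤ d and c ⊥ d, then a ⊥ b and a + b ≤ c + d) and − is isotone with respect to interval inclusion (if c ≤ a ≤ b ≤ d then b − a ≤ d − c), and that the conditions (A0)–(A4) hold: (A0) for all a, a ⊥ 0 and a + 0 = a; (A1) if a ⊥ b then b ⊥ a and a + b = b + a; (A2) if a ⊥ b, b ⊥ c and a ⊥ c, then a ⊥ (b + c), (a + b) ⊥ c and a + (b + c) = (a + b) + c; (A3) if a ⊥ b then a ≤ a + b and (a + b) − a = b; (A4) for all a, a + a' = 1. Then A is an orthomodular poset in which, for all x ⊥ y, x + y is the least upper bound of {x, y}; that is: (OMP1) for every x, the greatest lower bound of {x, x'} exists and equals 0; (OMP2) for x ⊥ y, x + y is the least upper bound of {x, y}; (OMP3) if x ≤ y then x ⊥ (x + y')' and x + (x + y')'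 = y. -/
/-- A bounded poset with involution carrying isotone partial operations
`+` (defined exactly on orthogonal pairs) and `−` (defined exactly on comparable pairs)
satisfying (A0)–(A4) is an orthomodular poset in which `x + y` is the join of orthogonal
`x, y`. -/
theorem orthomodular_of_effect_structure {A : Type*} [PartialOrder A] [BoundedOrder A]
    (inv : A → A)
    (le_iff : ∀ x y : A, x ≤ y ↔ inv y ≤ inv x)
    (inv_inv : ∀ x : A, inv (inv x) = x)
    -- the partial operation `+`, defined exactly on orthogonal pairs
    (plus : (a b : A) → a ≤ inv b → A)
    -- the partial operation `−`; `b − a` is defined exactly when `a ≤ b`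
    (sub : (b a : A) → a ≤ b → A)
    -- `+` is isotone
    (plus_mono : ∀ a b c d : A, a ≤ c → b ≤ d → ∀ hcd : c ≤ inv d,
      ∃ hab : a ≤ inv b, plus a b hab ≤ plus c d hcd)
    -- `−` is isotone with respect to interval inclusion
    (sub_mono : ∀ a b c d : A, ∀ (hca : c ≤ a) (hab : a ≤ b) (hbd : b ≤ d),
      sub b a hab ≤ sub d c ((hca.trans hab).trans hbd))
    -- (A0)
    (A0 : ∀ a : A, ∃ h : a ≤ inv ⊥, plus a ⊥ h = a)
    -- (A1)
    (A1 : ∀ (a b : A) (hab : a ≤ inv b), ∃ hba : b ≤ inv a, plus a b hab = plus b a hba)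
    -- (A2)
    (A2 : ∀ (a b c : A) (hab : a ≤ inv b) (hbc : b ≤ inv c), a ≤ inv c →
      ∃ (h1 : a ≤ inv (plus b c hbc)) (h2 : plus a b hab ≤ inv c),
        plus a (plus b c hbc) h1 = plus (plus a b hab) c h2)
    -- (A3)
    (A3 : ∀ (a b : A) (hab : a ≤ inv b),
      ∃ h : a ≤ plus a b hab, sub (plus a b hab) a h = b)
    -- (A4)
    (A4 : ∀ a : A, ∃ h : a ≤ inv (inv a), plus a (inv a) h = ⊤) :
    -- (OMP1): `⊥` is the greatest lower bound of `{x, x'}`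
    (∀ x : A, IsGLB ({x, inv x} : Set A) ⊥) ∧
    -- (OMP2): for orthogonal `x, y`, `x + y` is the least upper bound of `{x, y}`
    (∀ (x y : A) (h : x ≤ inv y), IsLUB ({x, y} : Set A) (plus x y h)) ∧
    -- (OMP3): if `x ≤ y` then `x ⊥ (x + y')'` and `x + (x + y')' = y`
    (∀ x y : A, x ≤ y →
      ∃ (h1 : x ≤ inv (inv y)) (h2 : x ≤ inv (inv (plus x (inv y) h1))),
        plus x (inv (plus x (inv y) h1)) h2 = y) := by
  -- basic facts about the involution
  have inv_bot : inv (⊥ : A) = ⊤ := le_antisymm le_top (A0 ⊤).choose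
  have inv_top : inv (⊤ : A) = ⊥ := by rw [← inv_bot]; exact inv_inv ⊥
  have orth_symm : ∀ a b : A, a ≤ inv b → b ≤ inv a := by
    intro a b h
    rw [le_iff b (inv a), inv_inv]
    exact h
  have le_plus_left : ∀ (a b : A) (h : a ≤ inv b), a ≤ plus a b h :=
    fun a b h => (A3 a b h).choose
  have le_plus_right : ∀ (a b : A) (h : a ≤ inv b), b ≤ plus a b h := by
    intro a b h
    obtain ⟨hba, hc⟩ := A1 a b h
    rw [hc]
    exact (A3 b a hba).choose
  have plus_le : ∀ (a b u : A) (h : a ≤ inv b), a ≤ u → b ≤ u → plus a b h ≤ u := by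
    intro a b u h ha hb
    have hbc : b ≤ inv (inv u) := by rw [inv_inv]; exact hb
    have hac : a ≤ inv (inv u) := by rw [inv_inv]; exact ha
    obtain ⟨H1, H2, -⟩ := A2 a b (inv u) h hbc hac
    rwa [inv_inv] at H2
  have cancel : ∀ (a b c : A) (hab : a ≤ inv b) (hac : a ≤ inv c),
      plus a b hab = plus a c hac → b = c := by
    intro a b c hab hac heq
    obtain ⟨h1, s1⟩ := A3 a b hab
    obtain ⟨h2, s2⟩ := A3 a c hac
    have gen : ∀ (t : A), plus a b hab = t → ∀ (h : a ≤ t), sub t a h = b := by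
      rintro t rfl h; exact s1
    exact ((gen _ heq h2).symm).trans s2
  refine ⟨?_, ?_, ?_⟩
  · -- OMP1
    intro x
    constructor
    · intro z _; exact bot_le
    · intro u hu
      have hux : u ≤ x := hu (Set.mem_insert _ _)
      have hux' : u ≤ inv x := hu (Set.mem_insert_of_mem _ rfl)
      have hbc : x ≤ inv (inv x) := by rw [inv_inv]
      have hac : u ≤ inv (inv x) := by rw [inv_inv]; exact hux
      obtain ⟨H1, -, -⟩ := A2 u x (inv x) hux' hbc hac
      obtain ⟨h4, e4⟩ := A4 x
      have H1' : u ≤ inv (plus x (inv x) h4) := H1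
      rw [e4, inv_top] at H1'
      exact H1'
  · -- OMP2
    intro x y h
    constructor
    · intro z hz
      rcases hz with rfl | hz
      · exact le_plus_left _ _ _
      · rw [Set.mem_singleton_iff] at hz
        subst hz
        exact le_plus_right _ _ _
    · intro u hu
      exact plus_le x y u h (hu (Set.mem_insert _ _)) (hu (Set.mem_insert_of_mem _ rfl))
  · -- OMP3
    intro x y hxy
    have hy' : x ≤ inv (inv y) := by rw [inv_inv]; exact hxy
    have hxz : x ≤ plus x (inv y) hy' := le_plus_left _ _ _
    have h2 : x ≤ inv (inv (plus x (inv y) hy')) := by rw [inv_inv]; exact hxz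
    refine ⟨hy', h2, ?_⟩
    set z := plus x (inv y) hy' with hzdef
    have hyx : inv y ≤ inv x := orth_symm x (inv y) hy'
    have hy'z : inv y ≤ z := le_plus_right _ _ _
    have hac : inv y ≤ inv (inv z) := by rw [inv_inv]; exact hy'z
    obtain ⟨H1, H2, Heq⟩ := A2 (inv y) x (inv z) hyx h2 hac
    have RHS_top : plus (plus (inv y) x hyx) (inv z) H2 = ⊤ := by
      obtain ⟨hba, hc⟩ := A1 x (inv y) hy'
      obtain ⟨h4, e4⟩ := A4 z
      have gen : ∀ (t : A), t = z → ∀ (h : t ≤ inv (inv z)), plus t (inv z) h = ⊤ := by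
        rintro t rfl h; exact e4
      exact gen _ hc.symm H2
    have Htop : plus (inv y) (plus x (inv z) h2) H1 = ⊤ := Heq.trans RHS_top
    have hyy : inv y ≤ inv y := le_refl _
    have top2 : plus (inv y) y hyy = ⊤ := by
      obtain ⟨h4, e4⟩ := A4 (inv y)
      have gen : ∀ (t : A), t = inv (inv y) → ∀ (h : inv y ≤ inv t), plus (inv y) t h = ⊤ := by
        rintro t ht h
        subst ht
        exact e4
      exact gen y (inv_inv y).symm hyy
    exact cancel (inv y) (plus x (inv z) h2) y H1 hyy (Htop.trans top2.symm)
end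

section
/- Let A be a bounded poset with involution with partial operations + (defined exactly on orthogonal pairs) and − (defined exactly when x ≤ y) which are isotone (if a ≤ c, b ≤ d and c ⊥ d, then a ⊥ b and a + b ≤ c + d; if c ≤ a ≤ b ≤ d then b − a ≤ d − c) and satisfy (A0) a ⊥ 0 and a + 0 = a, (A1) a ⊥ b implies b ⊥ a and a + b = b + a, (A2) pairwise orthogonal a, b, c satisfy a ⊥ (b + c), (a + b) ⊥ c and a + (b + c) = (a + b) + c, (A3) a ⊥ b implies a ≤ a + b and (a + b) − a = b, and (A4) a + a' = 1. If a ⊥ b and (a + b) ⊥ c, then a ⊥ c, b ⊥ c, a ⊥ (b + c), and (a + b) + c = a + (b + c). -/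
/-- In a bounded poset with involution with isotone partial operations
`+` and `−` satisfying (A0)–(A4): if `a ⊥ b` and `(a + b) ⊥ c`, then `a ⊥ c`, `b ⊥ c`,
`a ⊥ (b + c)`, and `(a + b) + c = a + (b + c)`. -/
theorem plus_assoc_of_sum_orthogonal {A : Type*} [PartialOrder A] [BoundedOrder A]
    (inv : A → A)
    (le_iff : ∀ x y : A, x ≤ y ↔ inv y ≤ inv x)
    (inv_inv : ∀ x : A, inv (inv x) = x)
    (plus : (a b : A) → a ≤ inv b → A)
    (sub : (b a : A) → a ≤ b → A)
    (plus_mono : ∀ a b c d : A, a ≤ c → b ≤ d → ∀ hcd : c ≤ inv d,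
      ∃ hab : a ≤ inv b, plus a b hab ≤ plus c d hcd)
    (sub_mono : ∀ a b c d : A, ∀ (hca : c ≤ a) (hab : a ≤ b) (hbd : b ≤ d),
      sub b a hab ≤ sub d c ((hca.trans hab).trans hbd))
    (A0 : ∀ a : A, ∃ h : a ≤ inv ⊥, plus a ⊥ h = a)
    (A1 : ∀ (a b : A) (hab : a ≤ inv b), ∃ hba : b ≤ inv a, plus a b hab = plus b a hba)
    (A2 : ∀ (a b c : A) (hab : a ≤ inv b) (hbc : b ≤ inv c), a ≤ inv c →
      ∃ (h1 : a ≤ inv (plus b c hbc)) (h2 : plus a b hab ≤ inv c),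
        plus a (plus b c hbc) h1 = plus (plus a b hab) c h2)
    (A3 : ∀ (a b : A) (hab : a ≤ inv b),
      ∃ h : a ≤ plus a b hab, sub (plus a b hab) a h = b)
    (A4 : ∀ a : A, ∃ h : a ≤ inv (inv a), plus a (inv a) h = ⊤) :
    ∀ (a b c : A) (hab : a ≤ inv b) (habc : plus a b hab ≤ inv c),
      ∃ (_ : a ≤ inv c) (hbc : b ≤ inv c) (h1 : a ≤ inv (plus b c hbc)),
        plus (plus a b hab) c habc = plus a (plus b c hbc) h1 := by
  intro a b c hab habc
  obtain ⟨hle, -⟩ := A3 a b hab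
  have hac : a ≤ inv c := hle.trans habc
  obtain ⟨hba, hcomm⟩ := A1 a b hab
  obtain ⟨hle2, -⟩ := A3 b a hba
  have hbc : b ≤ inv c := hle2.trans (hcomm ▸ habc)
  obtain ⟨h1, h2, heq⟩ := A2 a b c hab hbc hac
  exact ⟨hac, hbc, h1, heq.symm⟩
end
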